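/- arXiv:2504.02694 — 4 statements merged into one kernel-verified Lean document; each statement's English description precedes it below -/
import Mathlib

section
/- In the setting of (P_sl) and (P̂_sl,n): suppose (β*, γ*) is a KKT pair of (P_sl) at which LICQ holds, every row Cⱼ of C is nonzero, and for each n, (β̂ₙ, γ̂ₙ) is a random KKT pair of (P̂_sl,n). If β̂ₙ → β* in probability and Δₙ := max{‖T̂ₙ − T‖₂, ‖Ĉₙ − C‖_F, ‖d̂ₙ − d‖₂} = O_P(n^{-1/2}), then ‖γ̂ₙ − γ*‖₂ = O_P(‖β̂ₙ − β*‖₂ + n^{-1/2}). -/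
open MeasureTheory Filter

/-- Gradient of `f : ℝ^k → ℝ` at `x`, as a vector in `ℝ^k`. -/
noncomputable def gradE {k : ℕ} (f : EuclideanSpace ℝ (Fin k) → ℝ) (x : EuclideanSpace ℝ (Fin k)) :
    EuclideanSpace ℝ (Fin k) :=
  WithLp.toLp 2 (fun i => fderiv ℝ f x (EuclideanSpace.single i 1))

/-- Frobenius norm of a real matrix. -/
noncomputable def frobNorm {r k : ℕ} (M : Matrix (Fin r) (Fin k) ℝ) : ℝ :=
  Real.sqrt (∑ i, ∑ j, (M i j) ^ 2)

/-! Off the active set `J₀(β*)` the constraints stay strictly inactive for all data close to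
`(β*, C, d)`, so complementary slackness forces both `γ̂ₙ` and `γ*` to vanish there.
Subtracting the two stationarity equations gives
`Cᵀ(γ̂ₙ - γ*) = -(∇h(β̂ₙ, T̂ₙ) - ∇h(β*, T)) - (Ĉₙ - C)ᵀ γ̂ₙ`.
By LICQ, `Cᵀ` is bounded below on vectors supported on `J₀(β*)`, and `∇_β h` is locally
Lipschitz, so once all errors are small `‖γ̂ₙ - γ*‖ ≲ ‖β̂ₙ - β*‖ + Δₙ`, the term `(Ĉₙ - C)ᵀ γ̂ₙ`
being absorbed on the left. With probability tending to one the errors are that small. -/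

open WithLp Matrix Topology

section

variable {r k : ℕ}

theorem frobNorm_nonneg (A : Matrix (Fin r) (Fin k) ℝ) : 0 ≤ frobNorm A :=
  Real.sqrt_nonneg _

section Frobenius

attribute [local instance] Matrix.frobeniusNormedAddCommGroup

theorem frobNorm_eq_norm (A : Matrix (Fin r) (Fin k) ℝ) : frobNorm A = ‖A‖ := by
  simp [frobNorm, frobenius_norm_def, Real.sqrt_eq_rpow]

theorem norm_toLp_mulVec_le (A : Matrix (Fin r) (Fin k) ℝ) (x : EuclideanSpace ℝ (Fin k)) :
    ‖toLp 2 (A *ᵥ ofLp x)‖ ≤ frobNorm A * ‖x‖ := by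
  rw [frobNorm_eq_norm, ← frobenius_norm_replicateCol (ι := Unit), replicateCol_mulVec,
    ← frobenius_norm_replicateCol (ι := Unit)]
  exact frobenius_norm_mul _ _

theorem norm_toLp_transpose_mulVec_le (A : Matrix (Fin r) (Fin k) ℝ)
    (x : EuclideanSpace ℝ (Fin r)) :
    ‖toLp 2 (Aᵀ *ᵥ ofLp x)‖ ≤ frobNorm A * ‖x‖ := by
  simpa only [frobNorm_eq_norm, frobenius_norm_transpose] using norm_toLp_mulVec_le Aᵀ x

end Frobenius

theorem gradE_eq_gradient (f : EuclideanSpace ℝ (Fin k) → ℝ)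
    (x : EuclideanSpace ℝ (Fin k)) : gradE f x = gradient f x := by
  ext i
  simp [gradE, gradient, ← InnerProductSpace.toDual_symm_apply,
    EuclideanSpace.inner_single_right]

theorem norm_gradient_sub_gradient {E : Type*} [NormedAddCommGroup E] [InnerProductSpace ℝ E]
    [CompleteSpace E] (f g : E → ℝ) (x y : E) :
    ‖gradient f x - gradient g y‖ = ‖fderiv ℝ f x - fderiv ℝ g y‖ := by
  rw [gradient, gradient, ← map_sub, LinearIsometryEquiv.norm_map]

theorem exists_norm_gradE_sub_le {F : Type*} [NormedAddCommGroup F] [NormedSpace ℝ F]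
    {h : EuclideanSpace ℝ (Fin k) × F → ℝ} (hh : ContDiff ℝ 2 h)
    (β₀ : EuclideanSpace ℝ (Fin k)) (t₀ : F) :
    ∃ K ≥ (0 : ℝ), ∃ ρ > (0 : ℝ), ∀ β t, ‖β - β₀‖ < ρ → ‖t - t₀‖ < ρ →
      ‖gradE (fun β => h (β, t)) β - gradE (fun β => h (β, t₀)) β₀‖
        ≤ K * (‖β - β₀‖ + ‖t - t₀‖) := by
  have hpartial : ∀ β t, fderiv ℝ (fun β => h (β, t)) β
      = (fderiv ℝ h (β, t)).comp (.inl ℝ _ F) := fun β t =>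
    ((hh.differentiable (by norm_num) _).hasFDerivAt.comp β (hasFDerivAt_prodMk_left β t)).fderiv
  obtain ⟨K, s, hs, hlip⟩ :=
    ((hh.fderiv_right (m := 1) (by norm_num)).contDiffAt (x := (β₀, t₀))).exists_lipschitzOnWith
  obtain ⟨ρ, hρ, hball⟩ := Metric.mem_nhds_iff.mp hs
  refine ⟨K, K.coe_nonneg, ρ, hρ, fun β t hβ ht => ?_⟩
  have hdist : dist (β, t) (β₀, t₀) < ρ := by
    rw [Prod.dist_eq, dist_eq_norm, dist_eq_norm]; exact max_lt hβ ht
  calc ‖gradE (fun β => h (β, t)) β - gradE (fun β => h (β, t₀)) β₀‖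
      = ‖(fderiv ℝ h (β, t) - fderiv ℝ h (β₀, t₀)).comp (.inl ℝ _ F)‖ := by
        rw [gradE_eq_gradient, gradE_eq_gradient, norm_gradient_sub_gradient, hpartial,
          hpartial, ContinuousLinearMap.sub_comp]
    _ ≤ ‖fderiv ℝ h (β, t) - fderiv ℝ h (β₀, t₀)‖ :=
        (ContinuousLinearMap.opNorm_comp_le _ _).trans
          (mul_le_of_le_one_right (norm_nonneg _) (ContinuousLinearMap.norm_inl_le_one ℝ _ F))
    _ ≤ K * dist (β, t) (β₀, t₀) := by
        rw [← dist_eq_norm]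
        exact hlip.dist_le_mul _ (hball hdist) _ (hball (Metric.mem_ball_self hρ))
    _ ≤ K * (‖β - β₀‖ + ‖t - t₀‖) := by
        gcongr
        rw [Prod.dist_eq, dist_eq_norm, dist_eq_norm]
        exact max_le_add_of_nonneg (norm_nonneg _) (norm_nonneg _)

theorem exists_pos_mul_norm_le_norm_transpose_mulVec {ι κ : Type*} [Fintype ι] [Fintype κ]
    (C : Matrix ι κ ℝ) (p : ι → Prop)
    (hC : LinearIndependent ℝ (fun j : {j // p j} => (fun i => C j.1 i : κ → ℝ))) :
    ∃ c > (0 : ℝ), ∀ γ : EuclideanSpace ℝ ι, (∀ j, ¬ p j → γ j = 0) →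
      c * ‖γ‖ ≤ ‖toLp 2 (Cᵀ *ᵥ ofLp γ)‖ := by
  classical
  -- Adjoining the coordinates outside `p` makes `Cᵀ` injective, hence bounded below.
  let restrict : EuclideanSpace ℝ ι →ₗ[ℝ] ({j // ¬ p j} → ℝ) :=
    LinearMap.pi fun j => (EuclideanSpace.proj (𝕜 := ℝ) j.1).toLinearMap
  let F := (toEuclideanLin Cᵀ).prod restrict
  have hF : LinearMap.ker F = ⊥ := by
    refine LinearMap.ker_eq_bot'.2 fun γ hγ => ?_
    obtain ⟨hCγ, hout⟩ := Prod.ext_iff.1 hγ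
    have hout : ∀ j : {j // ¬ p j}, γ j = 0 := fun j => congr_fun hout j
    have hin : ∀ j : {j // p j}, γ j = 0 := by
      refine Fintype.linearIndependent_iff.1 hC (fun j => γ j) ?_
      have hsum := Fintype.sum_subtype_add_sum_subtype p fun j => γ j • (fun i => C j i)
      simp only [hout, zero_smul, Finset.sum_const_zero, add_zero] at hsum
      rw [hsum]
      calc ∑ j, γ j • (fun i => C j i) = Cᵀ *ᵥ ofLp γ := by
            rw [mulVec_transpose, vecMul_eq_sum]
        _ = 0 := congr_arg ofLp hCγ
    ext j
    by_cases hj : p j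
    · exact hin ⟨j, hj⟩
    · exact hout ⟨j, hj⟩
  obtain ⟨K, hK, hanti⟩ := F.exists_antilipschitzWith hF
  refine ⟨(K : ℝ)⁻¹, by positivity, fun γ hγ => ?_⟩
  have hrestrict : restrict γ = 0 := funext fun j => hγ j.1 j.2
  have := hanti.le_mul_dist γ 0
  rw [dist_zero_right, map_zero, dist_zero_right] at this
  rw [inv_mul_le_iff₀ (by exact_mod_cast hK)]
  simpa [F, hrestrict, toLpLin_apply] using this

theorem abs_mulVec_apply_le (A : Matrix (Fin r) (Fin k) ℝ)
    (x : EuclideanSpace ℝ (Fin k)) (j : Fin r) : |(A *ᵥ ofLp x) j| ≤ frobNorm A * ‖x‖ :=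
  (PiLp.norm_apply_le (toLp 2 (A *ᵥ ofLp x)) j).trans (norm_toLp_mulVec_le A x)

theorem abs_residual_sub_le (C C' : Matrix (Fin r) (Fin k) ℝ)
    (β β' : EuclideanSpace ℝ (Fin k)) (d d' : EuclideanSpace ℝ (Fin r)) (j : Fin r) :
    |((C' *ᵥ ofLp β') j - d' j) - ((C *ᵥ ofLp β) j - d j)|
      ≤ frobNorm (C' - C) * ‖β'‖ + frobNorm C * ‖β' - β‖ + ‖d' - d‖ := by
  have hsplit : ((C' *ᵥ ofLp β') j - d' j) - ((C *ᵥ ofLp β) j - d j)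
      = ((C' - C) *ᵥ ofLp β') j + (C *ᵥ ofLp (β' - β)) j - (d' - d) j := by
    simp only [sub_mulVec, ofLp_sub, mulVec_sub, Pi.sub_apply, PiLp.sub_apply]
    ring
  rw [hsplit]
  refine (abs_sub _ _).trans (add_le_add ((abs_add_le _ _).trans (add_le_add ?_ ?_)) ?_)
  · exact abs_mulVec_apply_le _ _ _
  · exact abs_mulVec_apply_le _ _ _
  · exact PiLp.norm_apply_le (d' - d) j

theorem exists_forall_mulVec_ne_of_mulVec_ne (C : Matrix (Fin r) (Fin k) ℝ)
    (β : EuclideanSpace ℝ (Fin k)) (d : EuclideanSpace ℝ (Fin r)) :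
    ∃ δ > (0 : ℝ), ∀ (β' : EuclideanSpace ℝ (Fin k)) (C' : Matrix (Fin r) (Fin k) ℝ)
      (d' : EuclideanSpace ℝ (Fin r)), ‖β' - β‖ ≤ δ → frobNorm (C' - C) ≤ δ → ‖d' - d‖ ≤ δ →
      ∀ j, (C *ᵥ ofLp β) j ≠ d j → (C' *ᵥ ofLp β') j ≠ d' j := by
  have hsmall : ∀ᶠ δ in 𝓝 (0 : ℝ), ∀ j, (C *ᵥ ofLp β) j ≠ d j →
      δ * (‖β‖ + δ + frobNorm C + 1) < |(C *ᵥ ofLp β) j - d j| := by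
    refine Filter.eventually_all.2 fun j => ?_
    by_cases hj : (C *ᵥ ofLp β) j = d j
    · exact Filter.Eventually.of_forall fun _ h => absurd hj h
    · have hcont : Tendsto (fun δ : ℝ => δ * (‖β‖ + δ + frobNorm C + 1)) (𝓝 0) (𝓝 0) :=
        (by fun_prop : Continuous fun δ : ℝ => δ * (‖β‖ + δ + frobNorm C + 1)).tendsto' 0 0
          (by simp)
      exact (hcont.eventually (gt_mem_nhds (abs_pos.2 (sub_ne_zero.2 hj)))).mono fun _ h _ => h
  obtain ⟨δ, hδ, hδpos⟩ := ((hsmall.filter_mono nhdsWithin_le_nhds).and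
    (self_mem_nhdsWithin : Set.Ioi (0 : ℝ) ∈ 𝓝[>] 0)).exists
  refine ⟨δ, hδpos, fun β' C' d' hβ hC hd j hj heq => ?_⟩
  have hβ' : ‖β'‖ ≤ ‖β‖ + δ := by
    linarith [norm_le_norm_add_norm_sub' β' β]
  have := abs_residual_sub_le C C' β β' d d' j
  rw [heq, sub_self, zero_sub, abs_neg] at this
  have h1 : frobNorm (C' - C) * ‖β'‖ ≤ δ * (‖β‖ + δ) :=
    mul_le_mul hC hβ' (norm_nonneg _) hδpos.le
  have h2 : frobNorm C * ‖β' - β‖ ≤ frobNorm C * δ :=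
    mul_le_mul_of_nonneg_left hβ (frobNorm_nonneg C)
  nlinarith [hδ j hj]

theorem norm_sub_le_of_stationary {C C' : Matrix (Fin r) (Fin k) ℝ}
    {γ γ' : EuclideanSpace ℝ (Fin r)} {g g' : EuclideanSpace ℝ (Fin k)} {c : ℝ} (hc : 0 < c)
    (hanti : c * ‖γ' - γ‖ ≤ ‖toLp 2 (Cᵀ *ᵥ ofLp (γ' - γ))‖)
    (hstat : g + toLp 2 (Cᵀ *ᵥ ofLp γ) = 0) (hstat' : g' + toLp 2 (C'ᵀ *ᵥ ofLp γ') = 0)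
    (hC : frobNorm (C' - C) ≤ c / 2) :
    ‖γ' - γ‖ ≤ 2 / c * (‖g' - g‖ + frobNorm (C' - C) * ‖γ‖) := by
  have hdiff : toLp 2 (Cᵀ *ᵥ ofLp (γ' - γ)) = -(g' - g) - toLp 2 ((C' - C)ᵀ *ᵥ ofLp γ') := by
    ext i
    have e := congr_arg (fun v : EuclideanSpace ℝ (Fin k) => v i) hstat
    have e' := congr_arg (fun v : EuclideanSpace ℝ (Fin k) => v i) hstat'
    simp only [ofLp_add, ofLp_zero, Pi.add_apply, Pi.zero_apply] at e e'
    simp only [ofLp_sub, ofLp_neg, mulVec_sub, transpose_sub, sub_mulVec, Pi.sub_apply,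
      Pi.neg_apply]
    linarith
  have hγ' : ‖γ'‖ ≤ ‖γ‖ + ‖γ' - γ‖ := norm_le_norm_add_norm_sub' γ' γ
  have hbound : c * ‖γ' - γ‖ ≤ ‖g' - g‖ + frobNorm (C' - C) * (‖γ‖ + ‖γ' - γ‖) :=
    calc c * ‖γ' - γ‖ ≤ ‖-(g' - g) - toLp 2 ((C' - C)ᵀ *ᵥ ofLp γ')‖ := hdiff ▸ hanti
      _ ≤ ‖g' - g‖ + frobNorm (C' - C) * ‖γ'‖ := by
          refine (norm_sub_le _ _).trans ?_
          rw [norm_neg]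
          gcongr
          exact norm_toLp_transpose_mulVec_le _ _
      _ ≤ ‖g' - g‖ + frobNorm (C' - C) * (‖γ‖ + ‖γ' - γ‖) := by
          gcongr
          exact frobNorm_nonneg _
  rw [div_mul_eq_mul_div, le_div_iff₀ hc]
  nlinarith [mul_le_mul_of_nonneg_right hC (norm_nonneg (γ' - γ))]

theorem exists_multiplier_error_bound {F : Type*} [NormedAddCommGroup F] [NormedSpace ℝ F]
    {h : EuclideanSpace ℝ (Fin k) × F → ℝ} (hh : ContDiff ℝ 2 h) {T : F}
    {C : Matrix (Fin r) (Fin k) ℝ} {d : EuclideanSpace ℝ (Fin r)} {β : EuclideanSpace ℝ (Fin k)}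
    {γ : EuclideanSpace ℝ (Fin r)}
    (hstat : ∀ i, gradE (fun β => h (β, T)) β i + ∑ j, C j i * γ j = 0)
    (hcs : ∀ j, γ j * ((∑ i, C j i * β i) - d j) = 0)
    (hLICQ : LinearIndependent ℝ
      (fun j : {j : Fin r // ∑ i, C j i * β i = d j} => (fun i => C j.1 i : Fin k → ℝ))) :
    ∃ δ > (0 : ℝ), ∃ M ≥ (0 : ℝ), ∀ β' γ' T' C' d',
      (∀ i, gradE (fun β => h (β, T')) β' i + ∑ j, C' j i * γ' j = 0) →
      (∀ j, γ' j * ((∑ i, C' j i * β' i) - d' j) = 0) →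
      ‖β' - β‖ ≤ δ → max (max ‖T' - T‖ (frobNorm (C' - C))) ‖d' - d‖ ≤ δ →
      ‖γ' - γ‖ ≤ M * (‖β' - β‖ + max (max ‖T' - T‖ (frobNorm (C' - C))) ‖d' - d‖) := by
  obtain ⟨c, hc, hanti⟩ := exists_pos_mul_norm_le_norm_transpose_mulVec C _ hLICQ
  obtain ⟨δ₁, hδ₁, hinactive⟩ := exists_forall_mulVec_ne_of_mulVec_ne C β d
  obtain ⟨K, hK, ρ, hρ, hgrad⟩ := exists_norm_gradE_sub_le hh β T
  refine ⟨min (min δ₁ (ρ / 2)) (c / 2), by positivity, 2 / c * (K + ‖γ‖), by positivity,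
    fun β' γ' T' C' d' hstat' hcs' hβ hΔ => ?_⟩
  set Δ := max (max ‖T' - T‖ (frobNorm (C' - C))) ‖d' - d‖
  have hT : ‖T' - T‖ ≤ Δ := (le_max_left _ _).trans (le_max_left _ _)
  have hC : frobNorm (C' - C) ≤ Δ := (le_max_right _ _).trans (le_max_left _ _)
  have hd : ‖d' - d‖ ≤ Δ := le_max_right _ _
  have hδ₁ : min (min δ₁ (ρ / 2)) (c / 2) ≤ δ₁ := (min_le_left _ _).trans (min_le_left _ _)
  have hδρ : min (min δ₁ (ρ / 2)) (c / 2) ≤ ρ / 2 := (min_le_left _ _).trans (min_le_right _ _)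
  have hδc : min (min δ₁ (ρ / 2)) (c / 2) ≤ c / 2 := min_le_right _ _
  have hsupp : ∀ j, ¬ ∑ i, C j i * β i = d j → (γ' - γ) j = 0 := fun j hj => by
    have hγ : γ j = 0 := (mul_eq_zero.1 (hcs j)).resolve_right (sub_ne_zero.2 hj)
    have hγ' : γ' j = 0 := (mul_eq_zero.1 (hcs' j)).resolve_right (sub_ne_zero.2
      (hinactive β' C' d' (hβ.trans hδ₁) (hC.trans (hΔ.trans hδ₁)) (hd.trans (hΔ.trans hδ₁)) j hj))
    simp [hγ, hγ']
  have hbound := norm_sub_le_of_stationary (g := gradE (fun β => h (β, T)) β)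
    (g' := gradE (fun β => h (β, T')) β') hc (hanti _ hsupp) (by ext i; exact hstat i)
    (by ext i; exact hstat' i) (hC.trans (hΔ.trans hδc))
  have hg : ‖gradE (fun β => h (β, T')) β' - gradE (fun β => h (β, T)) β‖
      ≤ K * (‖β' - β‖ + Δ) :=
    (hgrad β' T' (by linarith) (by linarith)).trans (by gcongr)
  calc ‖γ' - γ‖ ≤ 2 / c * (‖gradE (fun β => h (β, T')) β' - gradE (fun β => h (β, T)) β‖
        + frobNorm (C' - C) * ‖γ‖) := hbound
    _ ≤ 2 / c * (K * (‖β' - β‖ + Δ) + Δ * ‖γ‖) := by gcongr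
    _ ≤ 2 / c * (K + ‖γ‖) * (‖β' - β‖ + Δ) := by
        rw [mul_assoc]
        gcongr
        nlinarith [norm_nonneg (β' - β), norm_nonneg γ]

end

def IsBigOInProb {Ω : Type*} [MeasurableSpace Ω] (μ : Measure Ω) (R a : ℕ → Ω → ℝ) : Prop :=
  ∀ ε > (0 : ℝ), ∃ M > (0 : ℝ), ∃ N : ℕ, ∀ n ≥ N, μ {ω | M * a n ω < R n ω} ≤ ENNReal.ofReal ε

theorem IsBigOInProb.of_le_mul_add {Ω : Type*} [MeasurableSpace Ω] {μ : Measure Ω}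
    {X Y Z : ℕ → Ω → ℝ} {δ M : ℝ} (hδ : 0 < δ) (hM : 0 ≤ M) (hY0 : ∀ n ω, 0 ≤ Y n ω)
    (hbound : ∀ n, ∀ᵐ ω ∂μ, Y n ω ≤ δ → Z n ω ≤ δ → X n ω ≤ M * (Y n ω + Z n ω))
    (hY : ∀ ε > (0 : ℝ), Tendsto (fun n => μ {ω | ε < Y n ω}) atTop (𝓝 0))
    (hZ : IsBigOInProb μ Z fun n _ => 1 / √n) :
    IsBigOInProb μ X fun n ω => Y n ω + 1 / √n := by
  intro ε hε
  obtain ⟨M₀, hM₀, N, hN⟩ := hZ (ε / 2) (half_pos hε)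
  have hYsmall : ∀ᶠ n in atTop, μ {ω | δ < Y n ω} ≤ ENNReal.ofReal (ε / 2) :=
    (hY δ hδ).eventually (ge_mem_nhds (ENNReal.ofReal_pos.2 (half_pos hε)))
  have hrate : Tendsto (fun n : ℕ => M₀ * (1 / √n)) atTop (𝓝 0) := by
    simpa using (tendsto_inv_atTop_zero.comp
      (Real.tendsto_sqrt_atTop.comp tendsto_natCast_atTop_atTop)).const_mul M₀
  obtain ⟨N', hN'⟩ := eventually_atTop.1
    ((hYsmall.and (hrate.eventually (ge_mem_nhds hδ))).and (eventually_ge_atTop N))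
  refine ⟨M * (1 + M₀) + 1, by positivity, N', fun n hn => ?_⟩
  obtain ⟨⟨hYn, hrate_n⟩, hNn⟩ := hN' n hn
  have hsub : {ω | (M * (1 + M₀) + 1) * (Y n ω + 1 / √n) < X n ω}
      ≤ᵐ[μ] ({ω | δ < Y n ω} ∪ {ω | M₀ * (1 / √n) < Z n ω} : Set Ω) := by
    filter_upwards [hbound n] with ω hω hX
    replace hX : (M * (1 + M₀) + 1) * (Y n ω + 1 / √n) < X n ω := hX
    show δ < Y n ω ∨ M₀ * (1 / √n) < Z n ω
    by_contra! hgood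
    have hXle := hω hgood.1 (hgood.2.trans hrate_n)
    have hs : 0 ≤ 1 / √(n : ℝ) := by positivity
    nlinarith [hY0 n ω, mul_nonneg hM (hY0 n ω), mul_nonneg (mul_nonneg hM hM₀.le) (hY0 n ω),
      mul_nonneg hM hs, hX.le]
  calc μ {ω | (M * (1 + M₀) + 1) * (Y n ω + 1 / √n) < X n ω}
      ≤ μ ({ω | δ < Y n ω} ∪ {ω | M₀ * (1 / √n) < Z n ω}) := measure_mono_ae hsub
    _ ≤ μ {ω | δ < Y n ω} + μ {ω | M₀ * (1 / √n) < Z n ω} := measure_union_le _ _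
    _ ≤ ENNReal.ofReal (ε / 2) + ENNReal.ofReal (ε / 2) := add_le_add hYn (hN n hNn)
    _ = ENNReal.ofReal ε := by
        rw [← ENNReal.ofReal_add (half_pos hε).le (half_pos hε).le, add_halves]

theorem stmt5_general {r k q : ℕ}
    {Ω : Type*} [MeasurableSpace Ω] (μ : Measure Ω)
    (h : EuclideanSpace ℝ (Fin k) × EuclideanSpace ℝ (Fin q) → ℝ)
    (hh : ContDiff ℝ 2 h)
    (T : EuclideanSpace ℝ (Fin q)) (C : Matrix (Fin r) (Fin k) ℝ) (d : EuclideanSpace ℝ (Fin r))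
    (βstar : EuclideanSpace ℝ (Fin k)) (γstar : EuclideanSpace ℝ (Fin r))
    -- (β*, γ*) is a KKT pair of (P_sl)
    (hstat : ∀ i, gradE (fun β => h (β, T)) βstar i + ∑ j, C j i * γstar j = 0)
    (hcs : ∀ j, γstar j * ((∑ i, C j i * βstar i) - d j) = 0)
    -- LICQ holds at β*
    (hLICQ : LinearIndependent ℝ
      (fun j : {j : Fin r // ∑ i, C j i * βstar i = d j} => (fun i => C j.1 i : Fin k → ℝ)))
    -- random estimators and random KKT pairs of the approximating programs
    (That : ℕ → Ω → EuclideanSpace ℝ (Fin q))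
    (Chat : ℕ → Ω → Matrix (Fin r) (Fin k) ℝ)
    (dhat : ℕ → Ω → EuclideanSpace ℝ (Fin r))
    (βhat : ℕ → Ω → EuclideanSpace ℝ (Fin k))
    (γhat : ℕ → Ω → EuclideanSpace ℝ (Fin r))
    (hKKThat : ∀ n, ∀ᵐ ω ∂μ,
      (∀ j, 0 ≤ γhat n ω j) ∧
      (∀ i, gradE (fun β => h (β, That n ω)) (βhat n ω) i
              + ∑ j, Chat n ω j i * γhat n ω j = 0) ∧
      (∀ j, γhat n ω j * ((∑ i, Chat n ω j i * βhat n ω i) - dhat n ω j) = 0))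
    -- β̂ₙ → β* in probability
    (hβconv : ∀ ε > (0 : ℝ),
      Tendsto (fun n => μ {ω | ε < ‖βhat n ω - βstar‖}) atTop (nhds 0))
    -- Δₙ = O_P(n^{-1/2})
    (hΔ : ∀ ε > (0 : ℝ), ∃ M > (0 : ℝ), ∃ N : ℕ, ∀ n ≥ N,
      μ {ω | M / Real.sqrt n
          < max (max ‖That n ω - T‖ (frobNorm (Chat n ω - C))) ‖dhat n ω - d‖}
        ≤ ENNReal.ofReal ε) :
    -- conclusion: ‖γ̂ₙ − γ*‖₂ = O_P(‖β̂ₙ − β*‖₂ + n^{-1/2})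
    ∀ ε > (0 : ℝ), ∃ M > (0 : ℝ), ∃ N : ℕ, ∀ n ≥ N,
      μ {ω | M * (‖βhat n ω - βstar‖ + 1 / Real.sqrt n) < ‖γhat n ω - γstar‖}
        ≤ ENNReal.ofReal ε := by
  obtain ⟨δ, hδ, M, hM, hbound⟩ := exists_multiplier_error_bound hh hstat hcs hLICQ
  have hΔ' : IsBigOInProb μ
      (fun n ω => max (max ‖That n ω - T‖ (frobNorm (Chat n ω - C))) ‖dhat n ω - d‖)
      fun n _ => 1 / √n := by
    simpa only [IsBigOInProb, mul_one_div] using hΔ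
  exact IsBigOInProb.of_le_mul_add hδ hM (fun _ _ => norm_nonneg _)
    (fun n => (hKKThat n).mono fun _ hω => hbound _ _ _ _ _ hω.2.1 hω.2.2) hβconv hΔ'

/-- Convergence rate of the KKT multiplier estimators: if `(β*, γ*)` is a
KKT pair of `(P_sl)` at which LICQ holds, every row of `C` is nonzero, `(β̂ₙ, γ̂ₙ)` are random
KKT pairs of the approximating programs, `β̂ₙ → β*` in probability, and
`Δₙ = O_P(n^{-1/2})`, then `‖γ̂ₙ − γ*‖₂ = O_P(‖β̂ₙ − β*‖₂ + n^{-1/2})`. -/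
theorem stmt5 {r k q : ℕ}
    {Ω : Type*} [MeasurableSpace Ω] (μ : Measure Ω) [IsProbabilityMeasure μ]
    (h : EuclideanSpace ℝ (Fin k) × EuclideanSpace ℝ (Fin q) → ℝ)
    (hh : ContDiff ℝ 2 h)
    (T : EuclideanSpace ℝ (Fin q)) (C : Matrix (Fin r) (Fin k) ℝ) (d : EuclideanSpace ℝ (Fin r))
    (βstar : EuclideanSpace ℝ (Fin k)) (γstar : EuclideanSpace ℝ (Fin r))
    -- (β*, γ*) is a KKT pair of (P_sl)
    (hγnonneg : ∀ j, 0 ≤ γstar j)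
    (hstat : ∀ i, gradE (fun β => h (β, T)) βstar i + ∑ j, C j i * γstar j = 0)
    (hcs : ∀ j, γstar j * ((∑ i, C j i * βstar i) - d j) = 0)
    -- every row of C is nonzero
    (hrows : ∀ j, (fun i => C j i) ≠ (0 : Fin k → ℝ))
    -- LICQ holds at β*
    (hLICQ : LinearIndependent ℝ
      (fun j : {j : Fin r // ∑ i, C j i * βstar i = d j} => (fun i => C j.1 i : Fin k → ℝ)))
    -- random estimators and random KKT pairs of the approximating programs
    (That : ℕ → Ω → EuclideanSpace ℝ (Fin q))
    (Chat : ℕ → Ω → Matrix (Fin r) (Fin k) ℝ)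
    (dhat : ℕ → Ω → EuclideanSpace ℝ (Fin r))
    (βhat : ℕ → Ω → EuclideanSpace ℝ (Fin k))
    (γhat : ℕ → Ω → EuclideanSpace ℝ (Fin r))
    (hKKThat : ∀ n, ∀ᵐ ω ∂μ,
      (∀ j, 0 ≤ γhat n ω j) ∧
      (∀ i, gradE (fun β => h (β, That n ω)) (βhat n ω) i
              + ∑ j, Chat n ω j i * γhat n ω j = 0) ∧
      (∀ j, γhat n ω j * ((∑ i, Chat n ω j i * βhat n ω i) - dhat n ω j) = 0))
    -- β̂ₙ → β* in probability
    (hβconv : ∀ ε > (0 : ℝ),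
      Tendsto (fun n => μ {ω | ε < ‖βhat n ω - βstar‖}) atTop (nhds 0))
    -- Δₙ = O_P(n^{-1/2})
    (hΔ : ∀ ε > (0 : ℝ), ∃ M > (0 : ℝ), ∃ N : ℕ, ∀ n ≥ N,
      μ {ω | M / Real.sqrt n
          < max (max ‖That n ω - T‖ (frobNorm (Chat n ω - C))) ‖dhat n ω - d‖}
        ≤ ENNReal.ofReal ε) :
    -- conclusion: ‖γ̂ₙ − γ*‖₂ = O_P(‖β̂ₙ − β*‖₂ + n^{-1/2})
    ∀ ε > (0 : ℝ), ∃ M > (0 : ℝ), ∃ N : ℕ, ∀ n ≥ N,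
      μ {ω | M * (‖βhat n ω - βstar‖ + 1 / Real.sqrt n) < ‖γhat n ω - γstar‖}
        ≤ ENNReal.ofReal ε :=
  stmt5_general μ h hh T C d βstar γstar hstat hcs hLICQ That Chat dhat βhat γhat hKKThat hβconv hΔ
end

section
/- Let h : ℝ^k → ℝ be twice continuously differentiable, C ∈ ℝ^{m×k} with linearly independent rows, and d ∈ ℝ^m. Let β* ∈ ℝ^k and γ* ∈ ℝ^m satisfy: ∇h(β*) + Cᵀγ* = 0; γ*_j (Cⱼβ* − dⱼ) = 0 for all j; for every j either (Cⱼβ* = dⱼ and γ*_j > 0) or (Cⱼβ* < dⱼ and γ*_j = 0); and ∇²h(β*) is positive definite. Define H : ℝ^k × ℝ^m × (ℝ^k × ℝ^m) → ℝ^{k+m} by H(β, γ, (ξ₁, ξ₂)) = ( ∇h(β) + Cᵀγ + ξ₁ , diag(γ)(Cβ − d − ξ₂) ). Then: (a) the partial Jacobian of H with respect to (β, γ) at (β*, γ*, 0) is invertible; and (b) there exist a neighborhood U of 0 in ℝ^{k+m} and a continuously differentiable map ξ ↦ (β̄(ξ), γ̄(ξ)) on U with (β̄(0), γ̄(0)) =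 (β*, γ*), H(β̄(ξ), γ̄(ξ), ξ) = 0 for all ξ ∈ U, and whose derivative at ξ = 0 equals −[J_{(β,γ)}H(β*, γ*, 0)]⁻¹ · J_ξ H(β*, γ*, 0), where J_ξ H(β*, γ*, 0) is the block-diagonal matrix blockdiag(I_k, −diag(γ*)). -/
/-!
The Jacobian of `H` in `(β, γ)` at `(β*, γ*, 0)` is `[[∇²h(β*), Cᵀ], [diag(γ*) C, diag(Cβ* − d)]]`.
If `(u, w)` lies in its kernel, strict complementarity gives `wⱼ (Cⱼu) = 0` for every `j`
(`Cⱼu = 0` on active constraints, where `γ*ⱼ > 0`; `wⱼ = 0` on inactive ones, where the slack is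
nonzero). Hence `uᵀ∇²h(β*)u = −(Cu)ᵀw = 0`, so `u = 0` by positive definiteness, and then
`Cᵀw = 0` forces `w = 0` by linear independence of the rows of `C`. Part (b) is the `C¹` implicit
function theorem for `(ξ, β, γ) ↦ H(β, γ, ξ)`, whose derivative `−J⁻¹ J_ξ` is made explicit
by `J_ξ H = blockdiag(I, −diag γ*)`.
-/

open Matrix

/-- Hessian matrix of `f : ℝ^k → ℝ` at `x`. -/
noncomputable def hessE {k : ℕ} (f : EuclideanSpace ℝ (Fin k) → ℝ) (x : EuclideanSpace ℝ (Fin k)) :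
    Matrix (Fin k) (Fin k) ℝ :=
  fun i j => fderiv ℝ (fun y => fderiv ℝ f y (EuclideanSpace.single j 1)) x (EuclideanSpace.single i 1)

/-- The KKT system `H(β, γ, ξ) = (∇h(β) + Cᵀγ + ξ₁, diag(γ)(Cβ − d − ξ₂))` of the perturbed
program: minimize `h(β) + βᵀξ₁` subject to `Cβ − d − ξ₂ ≤ 0`. -/
noncomputable def Hkkt {k m : ℕ} (h : EuclideanSpace ℝ (Fin k) → ℝ)
    (C : Matrix (Fin m) (Fin k) ℝ) (d : Fin m → ℝ)
    (p : EuclideanSpace ℝ (Fin k) × EuclideanSpace ℝ (Fin m))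
    (ξ : EuclideanSpace ℝ (Fin k) × EuclideanSpace ℝ (Fin m)) :
    EuclideanSpace ℝ (Fin k) × EuclideanSpace ℝ (Fin m) :=
  (WithLp.toLp 2 (fun i => gradE h p.1 i + (∑ j, C j i * p.2 j) + ξ.1 i : Fin k → ℝ),
   WithLp.toLp 2 (fun j => p.2 j * ((∑ i, C j i * p.1 i) - d j - ξ.2 j) : Fin m → ℝ))

section Calculus

variable {𝕜 : Type*} [NontriviallyNormedField 𝕜]
  {E F G : Type*} [NormedAddCommGroup E] [NormedSpace 𝕜 E] [NormedAddCommGroup F] [NormedSpace 𝕜 F]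
  [NormedAddCommGroup G] [NormedSpace 𝕜 G]

theorem fderiv_comp_fst {f : E → G} {p : E × F} (hf : DifferentiableAt 𝕜 f p.1) :
    fderiv 𝕜 (fun y : E × F => f y.1) p = fderiv 𝕜 f p.1 ∘L ContinuousLinearMap.fst 𝕜 E F := by
  rw [← fderiv_fst (𝕜 := 𝕜) (p := p)]
  exact fderiv_comp p hf differentiableAt_fst

theorem fderiv_comp_inl {f : E × F → G} {u : E × F} (hf : DifferentiableAt 𝕜 f u) :
    fderiv 𝕜 f u ∘L ContinuousLinearMap.inl 𝕜 E F = fderiv 𝕜 (fun x => f (x, u.2)) u.1 :=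
  (hf.hasFDerivAt.comp u.1 (hasFDerivAt_prodMk_left u.1 u.2)).fderiv.symm

theorem fderiv_comp_inr {f : E × F → G} {u : E × F} (hf : DifferentiableAt 𝕜 f u) :
    fderiv 𝕜 f u ∘L ContinuousLinearMap.inr 𝕜 E F = fderiv 𝕜 (fun y => f (u.1, y)) u.2 :=
  (hf.hasFDerivAt.comp u.2 (hasFDerivAt_prodMk_right u.1 u.2)).fderiv.symm

theorem ContinuousLinearMap.isInvertible_of_injective [CompleteSpace 𝕜] [FiniteDimensional 𝕜 E]
    {f : E →L[𝕜] E} (hf : Function.Injective f) : f.IsInvertible :=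
  ⟨(LinearEquiv.ofInjectiveEndo (f : E →ₗ[𝕜] E) hf).toContinuousLinearEquiv, rfl⟩

@[fun_prop]
theorem PiLp.differentiable_toLp {ι : Type*} [Fintype ι] (p : ENNReal) [Fact (1 ≤ p)] :
    Differentiable 𝕜 (WithLp.toLp p : (ι → 𝕜) → PiLp p (fun _ : ι => 𝕜)) :=
  fun f => (PiLp.hasFDerivAt_toLp p f).differentiableAt

end Calculus

section EuclideanCoordinates

variable {ι κ : Type*} [Fintype ι] [Fintype κ] {X : Type*} [NormedAddCommGroup X] [NormedSpace ℝ X]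

theorem fderiv_fst_apply_euclidean (p q : EuclideanSpace ℝ ι × EuclideanSpace ℝ κ) (i : ι) :
    fderiv ℝ (fun y : EuclideanSpace ℝ ι × EuclideanSpace ℝ κ => y.1 i) p q = q.1 i :=
  DFunLike.congr_fun ((EuclideanSpace.proj i).comp (ContinuousLinearMap.fst ℝ _ _)).fderiv q

theorem fderiv_snd_apply_euclidean (p q : EuclideanSpace ℝ ι × EuclideanSpace ℝ κ) (j : κ) :
    fderiv ℝ (fun y : EuclideanSpace ℝ ι × EuclideanSpace ℝ κ => y.2 j) p q = q.2 j :=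
  DFunLike.congr_fun ((EuclideanSpace.proj j).comp (ContinuousLinearMap.snd ℝ _ _)).fderiv q

theorem fderiv_apply_fst_apply {f : X → EuclideanSpace ℝ ι × EuclideanSpace ℝ κ} {x : X}
    (hf : DifferentiableAt ℝ f x) (q : X) (i : ι) :
    (fderiv ℝ f x q).1 i = fderiv ℝ (fun y => (f y).1 i) x q :=
  (DFunLike.congr_fun (((EuclideanSpace.proj i).comp
    (ContinuousLinearMap.fst ℝ _ (EuclideanSpace ℝ κ))).hasFDerivAt.comp x hf.hasFDerivAt).fderiv q).symm

theorem fderiv_apply_snd_apply {f : X → EuclideanSpace ℝ ι × EuclideanSpace ℝ κ} {x : X}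
    (hf : DifferentiableAt ℝ f x) (q : X) (j : κ) :
    (fderiv ℝ f x q).2 j = fderiv ℝ (fun y => (f y).2 j) x q :=
  (DFunLike.congr_fun (((EuclideanSpace.proj j).comp
    (ContinuousLinearMap.snd ℝ (EuclideanSpace ℝ ι) _)).hasFDerivAt.comp x hf.hasFDerivAt).fderiv q).symm

end EuclideanCoordinates

section Hessian

variable {k : ℕ} {f : EuclideanSpace ℝ (Fin k) → ℝ} {x : EuclideanSpace ℝ (Fin k)}

theorem hessE_eq_fderiv_fderiv (hf : DifferentiableAt ℝ (fderiv ℝ f) x) (i j : Fin k) :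
    hessE f x i j =
      fderiv ℝ (fderiv ℝ f) x (EuclideanSpace.single i 1) (EuclideanSpace.single j 1) := by
  simp [hessE, fderiv_clm_apply hf (differentiableAt_const _)]

theorem fderiv_fderiv_apply_single (hf : DifferentiableAt ℝ (fderiv ℝ f) x)
    (u : EuclideanSpace ℝ (Fin k)) (j : Fin k) :
    fderiv ℝ (fderiv ℝ f) x u (EuclideanSpace.single j 1) = (u.ofLp ᵥ* hessE f x) j := by
  conv_lhs => rw [← (EuclideanSpace.basisFun (Fin k) ℝ).sum_repr u]
  simp [vecMul, dotProduct, hessE_eq_fderiv_fderiv hf]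

end Hessian

theorem eq_zero_of_kkt_matrix {ι κ : Type*} [Fintype ι] [Fintype κ]
    {H : Matrix ι ι ℝ} (hH : H.PosDef) {C : Matrix κ ι ℝ} (hC : LinearIndependent ℝ C.row)
    {s γ : κ → ℝ} (hsc : ∀ j, (s j = 0 ∧ 0 < γ j) ∨ (s j ≠ 0 ∧ γ j = 0))
    {u : ι → ℝ} {w : κ → ℝ} (h₁ : u ᵥ* H + w ᵥ* C = 0) (h₂ : w * s + γ * C *ᵥ u = 0) :
    u = 0 ∧ w = 0 := by
  have hw_Cu : w ⬝ᵥ C *ᵥ u = 0 := by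
    refine Finset.sum_eq_zero fun j _ => ?_
    have h₂j : w j * s j + γ j * (C *ᵥ u) j = 0 := congrFun h₂ j
    rcases hsc j with ⟨hs, hγ⟩ | ⟨hs, hγ⟩
    · simp [hs, hγ.ne'] at h₂j
      simp [h₂j]
    · simp [hs, hγ] at h₂j
      simp [h₂j]
  have hu : u = 0 := by
    by_contra hu
    have hpos := hH.dotProduct_mulVec_pos hu
    rw [star_trivial, dotProduct_mulVec, eq_neg_of_add_eq_zero_left h₁, neg_dotProduct,
      ← dotProduct_mulVec, hw_Cu, neg_zero] at hpos
    exact hpos.false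
  refine ⟨hu, Matrix.vecMul_injective_iff.2 hC ?_⟩
  simpa [hu] using h₁

section KKT

variable {k m : ℕ} {h : EuclideanSpace ℝ (Fin k) → ℝ} {C : Matrix (Fin m) (Fin k) ℝ} {d : Fin m → ℝ}

theorem contDiff_Hkkt {n : WithTop ℕ∞} (hh : ContDiff ℝ (n + 1) h) :
    ContDiff ℝ n (fun x : _ × _ => Hkkt h C d x.2 x.1) := by
  have := hh.fderiv_right le_rfl
  unfold Hkkt gradE
  fun_prop

theorem fderiv_Hkkt_zero_apply {p : EuclideanSpace ℝ (Fin k) × EuclideanSpace ℝ (Fin m)}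
    (hh : DifferentiableAt ℝ (fderiv ℝ h) p.1)
    (q : EuclideanSpace ℝ (Fin k) × EuclideanSpace ℝ (Fin m)) :
    fderiv ℝ (fun p => Hkkt h C d p 0) p q =
      (WithLp.toLp 2 (q.1.ofLp ᵥ* hessE h p.1 + q.2.ofLp ᵥ* C),
       WithLp.toLp 2 (q.2.ofLp * (C *ᵥ p.1.ofLp - d) + p.2.ofLp * C *ᵥ q.1.ofLp)) := by
  have hH : DifferentiableAt ℝ (fun p => Hkkt h C d p 0) p := by
    unfold Hkkt gradE
    fun_prop
  ext i
  · rw [fderiv_apply_fst_apply hH]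
    simp (disch := fun_prop) [Hkkt, gradE, fderiv_fun_add, fderiv_fun_sum, fderiv_clm_apply,
      fderiv_comp_fst, fderiv_const_mul, fderiv_snd_apply_euclidean, fderiv_fderiv_apply_single hh,
      vecMul, dotProduct, mul_comm]
  · rw [fderiv_apply_snd_apply hH]
    simp (disch := fun_prop) [Hkkt, fderiv_fun_mul, fderiv_fun_sum, fderiv_fun_sub,
      fderiv_fst_apply_euclidean, fderiv_snd_apply_euclidean, mulVec, dotProduct]
    ring

theorem fderiv_Hkkt_perturbation_apply (p ξ v : EuclideanSpace ℝ (Fin k) × EuclideanSpace ℝ (Fin m)) :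
    fderiv ℝ (Hkkt h C d p) ξ v = (v.1, WithLp.toLp 2 (-(p.2.ofLp * v.2.ofLp))) := by
  have hH : DifferentiableAt ℝ (Hkkt h C d p) ξ := by
    unfold Hkkt
    fun_prop
  ext i
  · rw [fderiv_apply_fst_apply hH]
    simp (disch := fun_prop) [Hkkt, fderiv_fst_apply_euclidean]
  · rw [fderiv_apply_snd_apply hH]
    simp (disch := fun_prop) [Hkkt, fderiv_fun_mul, fderiv_fun_sub, fderiv_snd_apply_euclidean]

theorem isInvertible_fderiv_Hkkt_zero {βstar : EuclideanSpace ℝ (Fin k)}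
    {γstar : EuclideanSpace ℝ (Fin m)} (hh : DifferentiableAt ℝ (fderiv ℝ h) βstar)
    (hC : LinearIndependent ℝ C.row)
    (hsc : ∀ j, ((∑ i, C j i * βstar i) = d j ∧ 0 < γstar j) ∨
                ((∑ i, C j i * βstar i) < d j ∧ γstar j = 0))
    (hpd : (hessE h βstar).PosDef) :
    (fderiv ℝ (fun p => Hkkt h C d p 0) (βstar, γstar)).IsInvertible := by
  refine ContinuousLinearMap.isInvertible_of_injective <| (injective_iff_map_eq_zero _).2 ?_
  rintro ⟨u, w⟩ hJ
  rw [fderiv_Hkkt_zero_apply hh] at hJ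
  obtain ⟨h₁, h₂⟩ := Prod.ext_iff.1 hJ
  have hsc' : ∀ j, ((C *ᵥ βstar.ofLp - d) j = 0 ∧ 0 < γstar j) ∨
      ((C *ᵥ βstar.ofLp - d) j ≠ 0 ∧ γstar j = 0) := fun j => by
    rcases hsc j with ⟨hβ, hγ⟩ | ⟨hβ, hγ⟩
    · exact .inl ⟨sub_eq_zero.2 hβ, hγ⟩
    · exact .inr ⟨(sub_neg.2 hβ).ne, hγ⟩
  obtain ⟨hu, hw⟩ := eq_zero_of_kkt_matrix hpd hC hsc'
    (congrArg WithLp.ofLp h₁) (congrArg WithLp.ofLp h₂)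
  exact Prod.ext (WithLp.ofLp_injective 2 hu) (WithLp.ofLp_injective 2 hw)

end KKT

/-- Implicit-function theorem for the KKT system of the perturbed linearly
constrained program: under strict complementarity, LICQ (linearly independent rows of `C`) and
positive definiteness of `∇²h(β*)`, (a) the partial Jacobian of `H` in `(β, γ)` at
`(β*, γ*, 0)` is invertible, and (b) there is a `C¹` implicit solution map `ξ ↦ (β̄(ξ), γ̄(ξ))`
around `ξ = 0` with `(β̄(0), γ̄(0)) = (β*, γ*)`, `H(β̄(ξ), γ̄(ξ), ξ) = 0`, and derivative at `0`
equal to `−[J_{(β,γ)}H]⁻¹ · J_ξ H` where `J_ξ H = blockdiag(I_k, −diag(γ*))`. -/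
theorem stmt8 {k m : ℕ}
    (h : EuclideanSpace ℝ (Fin k) → ℝ) (hh : ContDiff ℝ 2 h)
    (C : Matrix (Fin m) (Fin k) ℝ)
    (hC : LinearIndependent ℝ (fun j : Fin m => (fun i => C j i : Fin k → ℝ)))
    (d : Fin m → ℝ)
    (βstar : EuclideanSpace ℝ (Fin k)) (γstar : EuclideanSpace ℝ (Fin m))
    (hstat : ∀ i, gradE h βstar i + ∑ j, C j i * γstar j = 0)
    (hcs : ∀ j, γstar j * ((∑ i, C j i * βstar i) - d j) = 0)
    (hsc : ∀ j, ((∑ i, C j i * βstar i) = d j ∧ 0 < γstar j) ∨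
                ((∑ i, C j i * βstar i) < d j ∧ γstar j = 0))
    (hpd : (hessE h βstar).PosDef) :
    -- (a) invertibility of the partial Jacobian in (β, γ) at (β*, γ*, 0)
    Function.Bijective (fderiv ℝ (fun p => Hkkt h C d p 0) (βstar, γstar)) ∧
    -- (b) the local implicit solution map and its derivative at ξ = 0
    (∃ U ∈ nhds (0 : EuclideanSpace ℝ (Fin k) × EuclideanSpace ℝ (Fin m)),
      ∃ s : EuclideanSpace ℝ (Fin k) × EuclideanSpace ℝ (Fin m) →
            EuclideanSpace ℝ (Fin k) × EuclideanSpace ℝ (Fin m),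
        ContDiffOn ℝ 1 s U ∧ s 0 = (βstar, γstar) ∧
        (∀ ξ ∈ U, Hkkt h C d (s ξ) ξ = 0) ∧
        (∀ v : EuclideanSpace ℝ (Fin k) × EuclideanSpace ℝ (Fin m),
          fderiv ℝ (fun p => Hkkt h C d p 0) (βstar, γstar) (fderiv ℝ s 0 v)
            = (-v.1, WithLp.toLp 2 (fun j => γstar j * v.2 j : Fin m → ℝ)))) := by
  have hΦ : Differentiable ℝ (fderiv ℝ h) := (hh.fderiv_right le_rfl).differentiable one_ne_zero
  have hJ := isInvertible_fderiv_Hkkt_zero (d := d) (γstar := γstar) (hΦ βstar) hC hsc hpd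
  refine ⟨hJ.bijective, ?_⟩
  have hf : ContDiffAt ℝ 1 (fun x : _ × _ => Hkkt h C d x.2 x.1) (0, (βstar, γstar)) :=
    (contDiff_Hkkt (by rwa [one_add_one_eq_two])).contDiffAt
  have hf_inr := fderiv_comp_inr (hf.differentiableAt one_ne_zero)
  have hf_inl := fderiv_comp_inl (hf.differentiableAt one_ne_zero)
  rw [← hf_inr] at hJ
  have hKKT : Hkkt h C d (βstar, γstar) 0 = 0 := by
    ext i
    · simpa [Hkkt] using hstat i
    · simpa [Hkkt] using hcs i
  obtain ⟨U, hU, hsU⟩ := (hf.contDiffAt_implicitFunction one_ne_zero hJ).contDiffOn le_rfl (by simp)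
  refine ⟨U ∩ _, Filter.inter_mem hU (hf.eventually_apply_implicitFunction one_ne_zero hJ),
    hf.implicitFunction one_ne_zero hJ, hsU.mono Set.inter_subset_left,
    hf.implicitFunction_apply_self one_ne_zero hJ, fun ξ hξ => hξ.2.trans hKKT, fun v => ?_⟩
  rw [(hf.hasStrictFDerivAt_implicitFunction one_ne_zero hJ).hasFDerivAt.fderiv, ← hf_inr]
  simp only [ContinuousLinearMap.comp_apply, _root_.neg_apply, map_neg,
    hJ.self_apply_inverse]
  rw [← ContinuousLinearMap.comp_apply _ (ContinuousLinearMap.inl ℝ _ _), hf_inl]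
  change -(fderiv ℝ (Hkkt h C d (βstar, γstar)) 0 v) = _
  rw [fderiv_Hkkt_perturbation_apply]
  ext <;> simp
end

section
/- Let Y be an integrable random variable, A ∈ {0,1}, X a covariate vector, π(X) = P(A = 1 | X), and μ_a(X) = E[Y | X, A = a] for a ∈ {0,1} (so that E[Y | X, A] = A·μ₁(X) + (1 − A)·μ₀(X)). Then for any δ ∈ (0, ∞): E[ Y(δA + 1 − A) / (δπ(X) + 1 − π(X)) ] = E[ (δπ(X) μ₁(X) + (1 − π(X)) μ₀(X)) / (δπ(X) + 1 − π(X)) ]. -/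
open MeasureTheory Set

/-!
Write `d(x) = δ π(x) + 1 − π(x)` and `h = A μ₁(X) + (1 − A) μ₀(X) = E[Y | X, A]`.
Since `π ∈ [0, 1]`, `d ≥ min δ 1 > 0`, so the weight `(δA + 1 − A)/d(X)` is bounded and
`(X, A)`-measurable, and the tower property replaces `Y` by `h`. Because `A` is binary, the
weighted `h` equals `A · δμ₁(X)/d(X) + (1 − A) · μ₀(X)/d(X)`;
conditioning on `X` now replaces `A` by `π(X)`.
-/

section CondExp

variable {Ω : Type*} {m m₀ : MeasurableSpace Ω} {μ : Measure Ω}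

theorem condExp_mem_Icc [IsFiniteMeasure μ] (hm : m ≤ m₀) {f : Ω → ℝ} {a b : ℝ}
    (hf : Integrable f μ) (hfab : ∀ᵐ ω ∂μ, f ω ∈ Icc a b) :
    ∀ᵐ ω ∂μ, μ[f | m] ω ∈ Icc a b := by
  have ha : μ[fun _ ↦ a | m] ≤ᵐ[μ] μ[f | m] :=
    condExp_mono (integrable_const a) hf (hfab.mono fun _ h ↦ h.1)
  have hb : μ[f | m] ≤ᵐ[μ] μ[fun _ ↦ b | m] :=
    condExp_mono hf (integrable_const b) (hfab.mono fun _ h ↦ h.2)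
  filter_upwards [ha, hb] with ω ha hb
  rw [condExp_const hm] at ha hb
  exact ⟨ha, hb⟩

theorem condExp_const_sub [IsFiniteMeasure μ] (hm : m ≤ m₀) {f : Ω → ℝ} (hf : Integrable f μ)
    (c : ℝ) : μ[fun ω ↦ c - f ω | m] =ᵐ[μ] fun ω ↦ c - μ[f | m] ω := by
  have h := condExp_sub (integrable_const c) hf m
  rw [condExp_const hm] at h
  exact h

theorem integral_mul_eq_of_condExp_eq (hm : m ≤ m₀) [SigmaFinite (μ.trim hm)] {f g h : Ω → ℝ}
    (hg : StronglyMeasurable[m] g) (hf : Integrable f μ) (hgf : Integrable (fun ω ↦ g ω * f ω) μ)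
    (hfh : μ[f | m] =ᵐ[μ] h) :
    Integrable (fun ω ↦ g ω * h ω) μ ∧ ∫ ω, g ω * f ω ∂μ = ∫ ω, g ω * h ω ∂μ := by
  have hpull : μ[g * f | m] =ᵐ[μ] fun ω ↦ g ω * h ω := by
    filter_upwards [condExp_mul_of_stronglyMeasurable_left hg hgf hf, hfh] with ω h₁ h₂
    rw [h₁, Pi.mul_apply, h₂]
  refine ⟨integrable_condExp.congr hpull, ?_⟩
  rw [← integral_condExp hm]
  exact integral_congr_ae hpull

theorem integral_mix_eq_of_condExp_eq [IsFiniteMeasure μ] (hm : m ≤ m₀) {a p g₀ g₁ : Ω → ℝ}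
    (ha : AEMeasurable a μ) (ha01 : ∀ᵐ ω ∂μ, a ω = 0 ∨ a ω = 1) (hap : μ[a | m] =ᵐ[μ] p)
    (hg₀ : StronglyMeasurable[m] g₀) (hg₁ : StronglyMeasurable[m] g₁)
    (hint : Integrable (fun ω ↦ a ω * g₁ ω + (1 - a ω) * g₀ ω) μ) :
    ∫ ω, a ω * g₁ ω + (1 - a ω) * g₀ ω ∂μ = ∫ ω, p ω * g₁ ω + (1 - p ω) * g₀ ω ∂μ := by
  have ha_bdd : ∀ᵐ ω ∂μ, ‖a ω‖ ≤ 1 := ha01.mono fun ω h ↦ by rcases h with h | h <;> simp [h]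
  have ha'_bdd : ∀ᵐ ω ∂μ, ‖1 - a ω‖ ≤ 1 := ha01.mono fun ω h ↦ by rcases h with h | h <;> simp [h]
  have ha_int : Integrable a μ :=
    .of_mem_Icc 0 1 ha (ha01.mono fun ω h ↦ by rcases h with h | h <;> simp [h])
  have h₁ : Integrable (fun ω ↦ g₁ ω * a ω) μ := by
    refine (hint.bdd_mul ha.aestronglyMeasurable ha_bdd).congr ?_
    filter_upwards [ha01] with ω h
    rcases h with h | h <;> simp [h]
  have h₀ : Integrable (fun ω ↦ g₀ ω * (1 - a ω)) μ := by
    refine (hint.bdd_mul (aestronglyMeasurable_const.sub ha.aestronglyMeasurable) ha'_bdd).congr ?_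
    filter_upwards [ha01] with ω h
    rcases h with h | h <;> simp [h]
  have hap' : μ[fun ω ↦ 1 - a ω | m] =ᵐ[μ] fun ω ↦ 1 - p ω := by
    filter_upwards [condExp_const_sub hm ha_int 1, hap] with ω h₁ h₂
    rw [h₁, h₂]
  obtain ⟨hp₁, e₁⟩ := integral_mul_eq_of_condExp_eq hm hg₁ ha_int h₁ hap
  obtain ⟨hp₀, e₀⟩ :=
    integral_mul_eq_of_condExp_eq hm hg₀ (f := fun ω ↦ 1 - a ω)
      ((integrable_const 1).sub ha_int) h₀ hap'
  calc ∫ ω, a ω * g₁ ω + (1 - a ω) * g₀ ω ∂μ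
      = ∫ ω, g₁ ω * a ω ∂μ + ∫ ω, g₀ ω * (1 - a ω) ∂μ := by
        rw [← integral_add h₁ h₀]; simp only [mul_comm]
    _ = ∫ ω, g₁ ω * p ω ∂μ + ∫ ω, g₀ ω * (1 - p ω) ∂μ := by rw [e₁, e₀]
    _ = ∫ ω, p ω * g₁ ω + (1 - p ω) * g₀ ω ∂μ := by
        rw [← integral_add hp₁ hp₀]; simp only [mul_comm]

end CondExp

theorem min_le_mul_add_one_sub {δ t : ℝ} (ht : t ∈ Icc 0 1) : min δ 1 ≤ δ * t + 1 - t := by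
  rcases le_total δ 1 with h | h
  · rw [min_eq_left h]; nlinarith [ht.1, ht.2]
  · rw [min_eq_right h]; nlinarith [ht.1, ht.2]

theorem norm_mul_add_one_sub_div_le {δ a d : ℝ} (hδ : 0 < δ) (ha : a = 0 ∨ a = 1)
    (hd : min δ 1 ≤ d) : ‖(δ * a + 1 - a) / d‖ ≤ max δ 1 / min δ 1 := by
  have hnum : ‖δ * a + 1 - a‖ ≤ max δ 1 := by
    rcases ha with h | h <;> simp [h, abs_of_pos hδ]
  rw [norm_div]
  exact div_le_div₀ (by positivity) hnum (by positivity) (hd.trans (le_abs_self _))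

theorem mul_add_one_sub_div_mul_eq {δ a d x y : ℝ} (ha : a = 0 ∨ a = 1) :
    (δ * a + 1 - a) / d * (a * x + (1 - a) * y) = a * (δ * x / d) + (1 - a) * (y / d) := by
  rcases ha with h | h <;> simp only [h] <;> ring

theorem stmt10_general
    {Ω : Type*} [MeasurableSpace Ω] (μ : Measure Ω) [IsProbabilityMeasure μ]
    {p : ℕ} (X : Ω → (Fin p → ℝ)) (hX : Measurable X)
    (A Y : Ω → ℝ) (hA : Measurable A) (hY : Integrable Y μ)
    (hAbin : ∀ ω, A ω = 0 ∨ A ω = 1)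
    (π μ0 μ1 : (Fin p → ℝ) → ℝ)
    (hπm : Measurable π) (hμ0m : Measurable μ0) (hμ1m : Measurable μ1)
    (hπ : (fun ω => π (X ω)) =ᵐ[μ] μ[A | MeasurableSpace.comap X inferInstance])
    (hμcond : μ[Y | MeasurableSpace.comap (fun ω => (X ω, A ω)) inferInstance]
        =ᵐ[μ] fun ω => A ω * μ1 (X ω) + (1 - A ω) * μ0 (X ω))
    (δ : ℝ) (hδ : 0 < δ) :
    ∫ ω, Y ω * (δ * A ω + 1 - A ω) / (δ * π (X ω) + 1 - π (X ω)) ∂μ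
      = ∫ ω, (δ * π (X ω) * μ1 (X ω) + (1 - π (X ω)) * μ0 (X ω))
            / (δ * π (X ω) + 1 - π (X ω)) ∂μ := by
  have hm₁ : MeasurableSpace.comap X inferInstance ≤ _ := hX.comap_le
  have hm₂ : MeasurableSpace.comap (fun ω ↦ (X ω, A ω)) inferInstance ≤ _ :=
    (hX.prodMk hA).comap_le
  have hA01 : ∀ᵐ ω ∂μ, A ω ∈ Icc 0 1 :=
    ae_of_all _ fun ω ↦ by rcases hAbin ω with h | h <;> simp [h]
  have hd : ∀ᵐ ω ∂μ, min δ 1 ≤ δ * π (X ω) + 1 - π (X ω) := by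
    filter_upwards [hπ, condExp_mem_Icc hm₁ (.of_mem_Icc 0 1 hA.aemeasurable hA01) hA01]
      with ω h₁ h₂
    exact min_le_mul_add_one_sub (h₁ ▸ h₂)
  have hw_meas : StronglyMeasurable[MeasurableSpace.comap (fun ω ↦ (X ω, A ω)) inferInstance]
      fun ω ↦ (δ * A ω + 1 - A ω) / (δ * π (X ω) + 1 - π (X ω)) :=
    (Measurable.comp (g := fun q : (Fin p → ℝ) × ℝ ↦ (δ * q.2 + 1 - q.2) / (δ * π q.1 + 1 - π q.1))
      (by fun_prop) (comap_measurable _)).stronglyMeasurable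
  obtain ⟨hwh, hY_eq⟩ := integral_mul_eq_of_condExp_eq hm₂ hw_meas hY
    (hY.bdd_mul (hw_meas.mono hm₂).aestronglyMeasurable
      (hd.mono fun ω ↦ norm_mul_add_one_sub_div_le hδ (hAbin ω))) hμcond
  have hsplit := fun ω ↦ mul_add_one_sub_div_mul_eq (δ := δ) (d := δ * π (X ω) + 1 - π (X ω))
    (x := μ1 (X ω)) (y := μ0 (X ω)) (hAbin ω)
  have hA_eq := integral_mix_eq_of_condExp_eq hm₁ hA.aemeasurable (ae_of_all _ hAbin) hπ.symm
    (g₀ := fun ω ↦ μ0 (X ω) / (δ * π (X ω) + 1 - π (X ω)))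
    (g₁ := fun ω ↦ δ * μ1 (X ω) / (δ * π (X ω) + 1 - π (X ω)))
    ((by fun_prop : Measurable fun x ↦ μ0 x / (δ * π x + 1 - π x)).comp
      (comap_measurable X)).stronglyMeasurable
    ((by fun_prop : Measurable fun x ↦ δ * μ1 x / (δ * π x + 1 - π x)).comp
      (comap_measurable X)).stronglyMeasurable
    (hwh.congr (ae_of_all _ hsplit))
  calc _ = ∫ ω, (δ * A ω + 1 - A ω) / (δ * π (X ω) + 1 - π (X ω)) * Y ω ∂μ := by
        congr 1; ext ω; ring
    _ = _ := hY_eq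
    _ = _ := integral_congr_ae (ae_of_all _ hsplit)
    _ = _ := hA_eq
    _ = _ := by congr 1; ext ω; ring

/-- With `π(X)` a version of `E[A | X]` and
`E[Y | X, A] = A·μ₁(X) + (1 − A)·μ₀(X)` a.e., for any `δ ∈ (0, ∞)`:
`E[Y(δA + 1 − A)/(δπ(X) + 1 − π(X))] = E[(δπ(X)μ₁(X) + (1 − π(X))μ₀(X))/(δπ(X) + 1 − π(X))]`. -/
theorem stmt10
    {Ω : Type*} [MeasurableSpace Ω] (μ : Measure Ω) [IsProbabilityMeasure μ]
    {p : ℕ} (X : Ω → (Fin p → ℝ)) (hX : Measurable X)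
    (A Y : Ω → ℝ) (hA : Measurable A) (hYm : Measurable Y) (hY : Integrable Y μ)
    (hAbin : ∀ ω, A ω = 0 ∨ A ω = 1)
    (π μ0 μ1 : (Fin p → ℝ) → ℝ)
    (hπm : Measurable π) (hμ0m : Measurable μ0) (hμ1m : Measurable μ1)
    (hπ : (fun ω => π (X ω)) =ᵐ[μ] μ[A | MeasurableSpace.comap X inferInstance])
    (hμcond : μ[Y | MeasurableSpace.comap (fun ω => (X ω, A ω)) inferInstance]
        =ᵐ[μ] fun ω => A ω * μ1 (X ω) + (1 - A ω) * μ0 (X ω))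
    (δ : ℝ) (hδ : 0 < δ) :
    ∫ ω, Y ω * (δ * A ω + 1 - A ω) / (δ * π (X ω) + 1 - π (X ω)) ∂μ
      = ∫ ω, (δ * π (X ω) * μ1 (X ω) + (1 - π (X ω)) * μ0 (X ω))
            / (δ * π (X ω) + 1 - π (X ω)) ∂μ :=
  stmt10_general μ X hX A Y hA hY hAbin π μ0 μ1 hπm hμ0m hμ1m hπ hμcond δ hδ
end

section
/- Let 0 < ε < 1/2 and suppose ε < π₁(X) < 1 − ε almost surely. Then the uncentered efficient influence function φ_Q satisfies E[ φ_Q(Z; η, δ) ] = E[ (δπ₁(X) μ₁(X) + π₀(X) μ₀(X)) / (δπ₁(X) + π₀(X)) ]; that is, its mean equals the identified mean counterfactual outcome under the incremental intervention. -/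
/-!
Where `ε < π₁(X) < 1 - ε`, `φ_Q` splits algebraically as
`ψ(X) + w(X, A) (Y - μ_A(X)) + g(X) (A - π₁(X))`, where `ψ(X)` is the identified mean,
`w = (δA + 1 - A) / (δπ₁ + π₀)` and `g = δΔ / (δπ₁ + π₀)²`. Since `E[Y | X, A] = μ_A(X)` and
`E[A | X] = π₁(X)`, pulling the `σ(X, A)`-measurable `w` and the `σ(X)`-measurable `g` out of the
conditional expectations shows that both residual terms have mean zero.

Positivity keeps `w` and `δ / (δπ₁ + π₀)²` bounded. It also makes `μ₁(X)` integrable: `A μ₁(X)`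
is integrable because `E[Y | X, A]` is, and `E[|μ₁(X)| A | X] = |μ₁(X)| π₁(X) ≥ ε |μ₁(X)|`.
The same argument applied to `1 - A` handles `μ₀(X)`.
-/

open MeasureTheory

section PullOut

variable {Ω : Type*} {m m₀ : MeasurableSpace Ω} {μ : Measure Ω} {f g h : Ω → ℝ}

lemma mul_ae_eq_condExp_mul_of_ae_eq_condExp (hf : StronglyMeasurable[m] f)
    (hg : Integrable g μ) (hfg : Integrable (f * g) μ) (hh : h =ᵐ[μ] μ[g | m]) :
    f * h =ᵐ[μ] μ[f * g | m] := by
  filter_upwards [hh, condExp_mul_of_stronglyMeasurable_left hf hfg hg] with ω hω hfgω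
  simp only [Pi.mul_apply, hω, hfgω]

lemma integrable_mul_sub_of_ae_eq_condExp (hf : StronglyMeasurable[m] f)
    (hg : Integrable g μ) (hfg : Integrable (f * g) μ) (hh : h =ᵐ[μ] μ[g | m]) :
    Integrable (fun ω => f ω * (g ω - h ω)) μ := by
  simp only [mul_sub]
  exact hfg.sub
    (integrable_condExp.congr (mul_ae_eq_condExp_mul_of_ae_eq_condExp hf hg hfg hh).symm)

lemma integral_mul_sub_of_ae_eq_condExp (hm : m ≤ m₀) [SigmaFinite (μ.trim hm)]
    (hf : StronglyMeasurable[m] f) (hg : Integrable g μ) (hfg : Integrable (f * g) μ)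
    (hh : h =ᵐ[μ] μ[g | m]) :
    ∫ ω, f ω * (g ω - h ω) ∂μ = 0 := by
  have hfh := mul_ae_eq_condExp_mul_of_ae_eq_condExp hf hg hfg hh
  simp only [mul_sub]
  change ∫ ω, (f * g) ω - (f * h) ω ∂μ = 0
  rw [integral_sub hfg (integrable_condExp.congr hfh.symm), integral_congr_ae hfh,
    integral_condExp hm, sub_self]

lemma integrable_of_integrable_mul_of_le_condExp (hm : m ≤ m₀) {w : Ω → ℝ} {ε : ℝ} (hε : 0 < ε)
    (hf : StronglyMeasurable[m] f) (hw : Integrable w μ) (hw₀ : 0 ≤ᵐ[μ] w)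
    (hfw : Integrable (f * w) μ) (hεw : ∀ᵐ ω ∂μ, ε ≤ μ[w | m] ω) :
    Integrable f μ := by
  have habs : Integrable (|f| * w) μ :=
    hfw.abs.congr (hw₀.mono fun ω hω => by simp [abs_mul, abs_of_nonneg hω])
  have hce : Integrable (|f| * μ[w | m]) μ :=
    integrable_condExp.congr (condExp_mul_of_stronglyMeasurable_left hf.norm habs hw)
  -- `|f| ≤ ε⁻¹ * (|f| * μ[w | m])`, and the right side is `ε⁻¹ * μ[|f| * w | m]`
  refine (hce.const_mul ε⁻¹).mono' (hf.mono hm).aestronglyMeasurable ?_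
  filter_upwards [hεw] with ω hω
  rw [Real.norm_eq_abs, Pi.mul_apply, le_inv_mul_iff₀ hε, mul_comm]
  exact mul_le_mul_of_nonneg_left hω (abs_nonneg _)

lemma one_sub_ae_eq_condExp_one_sub [IsFiniteMeasure μ] (hm : m ≤ m₀) {A π : Ω → ℝ}
    (hA : Integrable A μ) (hπ : π =ᵐ[μ] μ[A | m]) :
    (fun ω => 1 - π ω) =ᵐ[μ] μ[fun ω => 1 - A ω | m] := by
  filter_upwards [hπ, condExp_sub (integrable_const 1) hA m] with ω hω hsub
  rw [show (fun ω => 1 - A ω) = (fun _ => (1 : ℝ)) - A from rfl, hsub, Pi.sub_apply,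
    condExp_const hm, hω]

end PullOut

section Pointwise

/-- `φ_Q` at `π₁(X) = p`, `A = a`, `Y = y`, `μₐ(X) = mₐ`; the indicators `1{A = a}` are `if`s. -/
noncomputable def incrementalEIF (δ p a y m₀ m₁ : ℝ) : ℝ :=
  (δ * p * ((if a = 1 then (1:ℝ) else 0) / p * (y - m₁) + m₁)
      + (1 - p) * ((if a = 0 then (1:ℝ) else 0) / (1 - p) * (y - m₀) + m₀))
    / (δ * p + (1 - p))
  + δ * (m₁ - m₀) * (a - p) / (δ * p + (1 - p)) ^ 2

noncomputable def incrementalMean (δ p m₀ m₁ : ℝ) : ℝ :=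
  (δ * p * m₁ + (1 - p) * m₀) / (δ * p + (1 - p))

noncomputable def outcomeResidual (δ p a y m₀ m₁ : ℝ) : ℝ :=
  (δ * a + (1 - a)) / (δ * p + (1 - p)) * (y - (a * m₁ + (1 - a) * m₀))

noncomputable def treatmentResidual (δ p a m₀ m₁ : ℝ) : ℝ :=
  δ / (δ * p + (1 - p)) ^ 2 * (m₁ - m₀) * (a - p)

variable {δ p a y m₀ m₁ ε : ℝ}

lemma incrementalDenom_pos (hδ : 0 < δ) (hp₀ : 0 ≤ p) (hp₁ : p ≤ 1) : 0 < δ * p + (1 - p) := by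
  rcases hp₁.eq_or_lt with rfl | hp₁ <;> nlinarith

lemma incrementalEIF_eq (ha : a = 0 ∨ a = 1) (hδ : 0 < δ) (hp₀ : 0 < p) (hp₁ : p < 1) :
    incrementalEIF δ p a y m₀ m₁ = incrementalMean δ p m₀ m₁ + outcomeResidual δ p a y m₀ m₁
      + treatmentResidual δ p a m₀ m₁ := by
  have hD := (incrementalDenom_pos hδ hp₀.le hp₁.le).ne'
  have hp₁' : 1 - p ≠ 0 := by linarith
  rcases ha with rfl | rfl <;>
  · simp only [incrementalEIF, incrementalMean, outcomeResidual, treatmentResidual]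
    norm_num
    field_simp
    ring

lemma abs_incrementalMean_le (hδ : 0 < δ) (hp₀ : 0 ≤ p) (hp₁ : p ≤ 1) :
    |incrementalMean δ p m₀ m₁| ≤ |m₀| + |m₁| := by
  have hD := incrementalDenom_pos hδ hp₀ hp₁
  rw [incrementalMean, abs_div, abs_of_pos hD, div_le_iff₀ hD]
  calc |δ * p * m₁ + (1 - p) * m₀| ≤ δ * p * |m₁| + (1 - p) * |m₀| := by
        refine (abs_add_le _ _).trans_eq ?_
        rw [abs_mul (δ * p), abs_mul (1 - p), abs_of_nonneg (mul_nonneg hδ.le hp₀),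
          abs_of_nonneg (sub_nonneg.2 hp₁)]
    _ ≤ (|m₀| + |m₁|) * (δ * p + (1 - p)) := by
        nlinarith [abs_nonneg m₀, abs_nonneg m₁, mul_nonneg hδ.le hp₀]

lemma abs_incrementalWeight_le (ha : a = 0 ∨ a = 1) (hδ : 0 < δ) (hε : 0 < ε) (hεp : ε < p)
    (hpε : p < 1 - ε) : |(δ * a + (1 - a)) / (δ * p + (1 - p))| ≤ ε⁻¹ := by
  have hD := incrementalDenom_pos hδ (hε.trans hεp).le (by linarith)
  rw [abs_div, abs_of_pos hD, div_le_iff₀ hD, inv_mul_eq_div, le_div_iff₀ hε]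
  rcases ha with rfl | rfl <;> norm_num [abs_of_pos hδ] <;> nlinarith

lemma abs_div_sq_incrementalDenom_le (hδ : 0 < δ) (hε : 0 < ε) (hεp : ε < p)
    (hpε : p < 1 - ε) : |δ / (δ * p + (1 - p)) ^ 2| ≤ (ε ^ 2)⁻¹ := by
  have hD := incrementalDenom_pos hδ (hε.trans hεp).le (by linarith)
  rw [abs_of_pos (by positivity), div_le_iff₀ (by positivity), inv_mul_eq_div,
    le_div_iff₀ (by positivity)]
  have h₁ : δ * ε ≤ δ * p + (1 - p) := by nlinarith
  have h₂ : ε ≤ δ * p + (1 - p) := by nlinarith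
  nlinarith [mul_le_mul h₁ h₂ hε.le hD.le]

end Pointwise

section Model

variable {Ω β : Type*} [MeasurableSpace Ω] [MeasurableSpace β] {μ : Measure Ω}
  {X : Ω → β} {A Y : Ω → ℝ} {π₁ μ₀ μ₁ : β → ℝ} {δ ε : ℝ}

lemma norm_le_one_of_eq_zero_or_eq_one {a : ℝ} (ha : a = 0 ∨ a = 1) : ‖a‖ ≤ 1 := by
  rcases ha with rfl | rfl <;> simp

lemma integrable_of_eq_zero_or_eq_one [IsFiniteMeasure μ] (hA : Measurable A)
    (hAbin : ∀ ω, A ω = 0 ∨ A ω = 1) :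
    Integrable A μ :=
  (integrable_const 1).mono' hA.aestronglyMeasurable
    (.of_forall fun ω => norm_le_one_of_eq_zero_or_eq_one (hAbin ω))

lemma integrable_comp_of_lt_propensity [IsFiniteMeasure μ] (hX : Measurable X) (hA : Measurable A)
    (hAbin : ∀ ω, A ω = 0 ∨ A ω = 1) (hμ₁ : Measurable μ₁) (hε : 0 < ε)
    (hπε : ∀ᵐ ω ∂μ, ε < π₁ (X ω))
    (hπ : (fun ω => π₁ (X ω)) =ᵐ[μ] μ[A | MeasurableSpace.comap X inferInstance])
    (hreg : Integrable (fun ω => A ω * μ₁ (X ω) + (1 - A ω) * μ₀ (X ω)) μ) :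
    Integrable (fun ω => μ₁ (X ω)) μ := by
  have hAbdd : ∀ᵐ ω ∂μ, ‖A ω‖ ≤ 1 :=
    .of_forall fun ω => norm_le_one_of_eq_zero_or_eq_one (hAbin ω)
  refine integrable_of_integrable_mul_of_le_condExp hX.comap_le hε
    (hμ₁.comp (comap_measurable X)).stronglyMeasurable (integrable_of_eq_zero_or_eq_one hA hAbin)
    (.of_forall fun ω => by rcases hAbin ω with h | h <;> simp [h])
    ((hreg.bdd_mul hA.aestronglyMeasurable hAbdd).congr (.of_forall fun ω => ?_))
    (by filter_upwards [hπε, hπ] with ω h hω; exact hω ▸ h.le)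
  rcases hAbin ω with h | h <;> simp [h]

/-- The control arm is the treated arm of `1 - A`, whose propensity is `1 - π₁`. -/
lemma integrable_comp_of_propensity_lt [IsFiniteMeasure μ] (hX : Measurable X) (hA : Measurable A)
    (hAbin : ∀ ω, A ω = 0 ∨ A ω = 1) (hμ₀ : Measurable μ₀) (hε : 0 < ε)
    (hπε : ∀ᵐ ω ∂μ, π₁ (X ω) < 1 - ε)
    (hπ : (fun ω => π₁ (X ω)) =ᵐ[μ] μ[A | MeasurableSpace.comap X inferInstance])
    (hreg : Integrable (fun ω => A ω * μ₁ (X ω) + (1 - A ω) * μ₀ (X ω)) μ) :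
    Integrable (fun ω => μ₀ (X ω)) μ :=
  integrable_comp_of_lt_propensity (A := fun ω => 1 - A ω) (π₁ := fun x => 1 - π₁ x) (μ₀ := μ₁)
    hX (measurable_const.sub hA) (fun ω => by rcases hAbin ω with h | h <;> simp [h]) hμ₀ hε
    (hπε.mono fun _ h => by linarith)
    (one_sub_ae_eq_condExp_one_sub hX.comap_le (integrable_of_eq_zero_or_eq_one hA hAbin) hπ)
    (hreg.congr (.of_forall fun ω => by ring))

lemma integrable_incrementalMean (hX : Measurable X) (hπ₁ : Measurable π₁)
    (hμ₀ : Measurable μ₀) (hμ₁ : Measurable μ₁) (hδ : 0 < δ)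
    (hπ01 : ∀ᵐ ω ∂μ, 0 ≤ π₁ (X ω) ∧ π₁ (X ω) ≤ 1) (hμ₀X : Integrable (fun ω => μ₀ (X ω)) μ)
    (hμ₁X : Integrable (fun ω => μ₁ (X ω)) μ) :
    Integrable (fun ω => incrementalMean δ (π₁ (X ω)) (μ₀ (X ω)) (μ₁ (X ω))) μ := by
  refine (hμ₀X.abs.add hμ₁X.abs).mono' ?_ ?_
  · exact (by unfold incrementalMean; fun_prop : Measurable _).aestronglyMeasurable
  · filter_upwards [hπ01] with ω h
    exact abs_incrementalMean_le hδ h.1 h.2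

lemma integrable_outcomeResidual_and_integral_eq_zero [IsFiniteMeasure μ] (hX : Measurable X)
    (hA : Measurable A) (hAbin : ∀ ω, A ω = 0 ∨ A ω = 1) (hπ₁ : Measurable π₁) (hδ : 0 < δ)
    (hε : 0 < ε) (hπε : ∀ᵐ ω ∂μ, ε < π₁ (X ω) ∧ π₁ (X ω) < 1 - ε) (hY : Integrable Y μ)
    (hμcond : μ[Y | MeasurableSpace.comap (fun ω => (X ω, A ω)) inferInstance]
        =ᵐ[μ] fun ω => A ω * μ₁ (X ω) + (1 - A ω) * μ₀ (X ω)) :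
    Integrable (fun ω => outcomeResidual δ (π₁ (X ω)) (A ω) (Y ω) (μ₀ (X ω)) (μ₁ (X ω))) μ ∧
      ∫ ω, outcomeResidual δ (π₁ (X ω)) (A ω) (Y ω) (μ₀ (X ω)) (μ₁ (X ω)) ∂μ = 0 := by
  have hm := (hX.prodMk hA).comap_le
  have hw : StronglyMeasurable[MeasurableSpace.comap (fun ω => (X ω, A ω)) inferInstance]
      (fun ω => (δ * A ω + (1 - A ω)) / (δ * π₁ (X ω) + (1 - π₁ (X ω)))) :=
    ((by fun_prop : Measurable fun q : β × ℝ =>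
      (δ * q.2 + (1 - q.2)) / (δ * π₁ q.1 + (1 - π₁ q.1))).comp
      (comap_measurable _)).stronglyMeasurable
  have hwY := hY.bdd_mul (hw.mono hm).aestronglyMeasurable <| hπε.mono fun ω h =>
    abs_incrementalWeight_le (hAbin ω) hδ hε h.1 h.2
  exact ⟨integrable_mul_sub_of_ae_eq_condExp hw hY hwY hμcond.symm,
    integral_mul_sub_of_ae_eq_condExp hm hw hY hwY hμcond.symm⟩

lemma integrable_treatmentResidual_and_integral_eq_zero [IsFiniteMeasure μ] (hX : Measurable X)
    (hA : Measurable A) (hAbin : ∀ ω, A ω = 0 ∨ A ω = 1) (hπ₁ : Measurable π₁) (hμ₀ : Measurable μ₀)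
    (hμ₁ : Measurable μ₁) (hδ : 0 < δ) (hε : 0 < ε)
    (hπε : ∀ᵐ ω ∂μ, ε < π₁ (X ω) ∧ π₁ (X ω) < 1 - ε)
    (hπ : (fun ω => π₁ (X ω)) =ᵐ[μ] μ[A | MeasurableSpace.comap X inferInstance])
    (hμ₀X : Integrable (fun ω => μ₀ (X ω)) μ) (hμ₁X : Integrable (fun ω => μ₁ (X ω)) μ) :
    Integrable (fun ω => treatmentResidual δ (π₁ (X ω)) (A ω) (μ₀ (X ω)) (μ₁ (X ω))) μ ∧
      ∫ ω, treatmentResidual δ (π₁ (X ω)) (A ω) (μ₀ (X ω)) (μ₁ (X ω)) ∂μ = 0 := by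
  have hm := hX.comap_le
  have hw : StronglyMeasurable[MeasurableSpace.comap X inferInstance]
      (fun ω => δ / (δ * π₁ (X ω) + (1 - π₁ (X ω))) ^ 2 * (μ₁ (X ω) - μ₀ (X ω))) :=
    ((by fun_prop : Measurable fun x => δ / (δ * π₁ x + (1 - π₁ x)) ^ 2 * (μ₁ x - μ₀ x)).comp
      (comap_measurable _)).stronglyMeasurable
  have hwA := ((hμ₁X.sub hμ₀X).bdd_mul (by fun_prop : Measurable _).aestronglyMeasurable <|
      hπε.mono fun ω h => abs_div_sq_incrementalDenom_le hδ hε h.1 h.2).mul_bdd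
    hA.aestronglyMeasurable (.of_forall fun ω => norm_le_one_of_eq_zero_or_eq_one (hAbin ω))
  have hAint := integrable_of_eq_zero_or_eq_one hA hAbin (μ := μ)
  exact ⟨integrable_mul_sub_of_ae_eq_condExp hw hAint hwA hπ,
    integral_mul_sub_of_ae_eq_condExp hm hw hAint hwA hπ⟩

end Model

theorem stmt11_general
    {Ω : Type*} [MeasurableSpace Ω] (μ : Measure Ω) [IsProbabilityMeasure μ]
    {p : ℕ} (X : Ω → (Fin p → ℝ)) (hX : Measurable X)
    (A Y : Ω → ℝ) (hA : Measurable A) (hY : Integrable Y μ)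
    (hAbin : ∀ ω, A ω = 0 ∨ A ω = 1)
    (π1 μ0 μ1 : (Fin p → ℝ) → ℝ)
    (hπm : Measurable π1) (hμ0m : Measurable μ0) (hμ1m : Measurable μ1)
    (ε : ℝ) (hε0 : 0 < ε)
    (hπbound : ∀ᵐ ω ∂μ, ε < π1 (X ω) ∧ π1 (X ω) < 1 - ε)
    -- π₁(X) is a version of P(A = 1 | X)
    (hπ : (fun ω => π1 (X ω)) =ᵐ[μ] μ[A | MeasurableSpace.comap X inferInstance])
    -- μ_a(X) = E[Y | X, A = a]: E[Y | X, A] = A μ₁(X) + (1 − A) μ₀(X) a.e.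
    (hμcond : μ[Y | MeasurableSpace.comap (fun ω => (X ω, A ω)) inferInstance]
        =ᵐ[μ] fun ω => A ω * μ1 (X ω) + (1 - A ω) * μ0 (X ω))
    (δ : ℝ) (hδ : 0 < δ) :
    -- E[φ_Q(Z; η, δ)] = E[(δπ₁μ₁ + π₀μ₀)/(δπ₁ + π₀)]
    ∫ ω,
        ((δ * π1 (X ω) *
            ((if A ω = 1 then (1:ℝ) else 0) / π1 (X ω) * (Y ω - μ1 (X ω)) + μ1 (X ω))
          + (1 - π1 (X ω)) *
            ((if A ω = 0 then (1:ℝ) else 0) / (1 - π1 (X ω)) * (Y ω - μ0 (X ω)) + μ0 (X ω)))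
          / (δ * π1 (X ω) + (1 - π1 (X ω)))
        + δ * (μ1 (X ω) - μ0 (X ω)) * (A ω - π1 (X ω))
          / (δ * π1 (X ω) + (1 - π1 (X ω))) ^ 2) ∂μ
      = ∫ ω, (δ * π1 (X ω) * μ1 (X ω) + (1 - π1 (X ω)) * μ0 (X ω))
            / (δ * π1 (X ω) + (1 - π1 (X ω))) ∂μ := by
  have hreg := integrable_condExp.congr hμcond
  have hμ₁X := integrable_comp_of_lt_propensity hX hA hAbin hμ1m hε0
    (hπbound.mono fun _ h => h.1) hπ hreg
  have hμ₀X := integrable_comp_of_propensity_lt hX hA hAbin hμ0m hε0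
    (hπbound.mono fun _ h => h.2) hπ hreg
  have hψ := integrable_incrementalMean hX hπm hμ0m hμ1m hδ
    (hπbound.mono fun _ h => ⟨by linarith, by linarith⟩) hμ₀X hμ₁X
  obtain ⟨hR₁, hR₁0⟩ := integrable_outcomeResidual_and_integral_eq_zero hX hA hAbin hπm hδ hε0
    hπbound hY hμcond
  obtain ⟨hR₂, hR₂0⟩ := integrable_treatmentResidual_and_integral_eq_zero hX hA hAbin hπm hμ0m
    hμ1m hδ hε0 hπbound hπ hμ₀X hμ₁X
  change ∫ ω, incrementalEIF δ (π1 (X ω)) (A ω) (Y ω) (μ0 (X ω)) (μ1 (X ω)) ∂μ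
    = ∫ ω, incrementalMean δ (π1 (X ω)) (μ0 (X ω)) (μ1 (X ω)) ∂μ
  rw [integral_congr_ae (hπbound.mono fun ω h =>
      incrementalEIF_eq (hAbin ω) hδ (hε0.trans h.1) (by linarith [h.2])),
    integral_add (f := fun ω => _ + _) (hψ.add hR₁) hR₂, integral_add hψ hR₁, hR₁0, hR₂0,
    add_zero, add_zero]

/-- Under strict positivity `ε < π₁(X) < 1 − ε`, the mean of the uncentered
efficient influence function `φ_Q(Z; η, δ)` equals the identified mean counterfactual outcome
`E[(δπ₁(X)μ₁(X) + π₀(X)μ₀(X))/(δπ₁(X) + π₀(X))]` under the incremental intervention. -/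
theorem stmt11
    {Ω : Type*} [MeasurableSpace Ω] (μ : Measure Ω) [IsProbabilityMeasure μ]
    {p : ℕ} (X : Ω → (Fin p → ℝ)) (hX : Measurable X)
    (A Y : Ω → ℝ) (hA : Measurable A) (hYm : Measurable Y) (hY : Integrable Y μ)
    (hAbin : ∀ ω, A ω = 0 ∨ A ω = 1)
    (π1 μ0 μ1 : (Fin p → ℝ) → ℝ)
    (hπm : Measurable π1) (hμ0m : Measurable μ0) (hμ1m : Measurable μ1)
    (ε : ℝ) (hε0 : 0 < ε) (hε2 : ε < 1 / 2)
    (hπbound : ∀ᵐ ω ∂μ, ε < π1 (X ω) ∧ π1 (X ω) < 1 - ε)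
    -- π₁(X) is a version of P(A = 1 | X)
    (hπ : (fun ω => π1 (X ω)) =ᵐ[μ] μ[A | MeasurableSpace.comap X inferInstance])
    -- μ_a(X) = E[Y | X, A = a]: E[Y | X, A] = A μ₁(X) + (1 − A) μ₀(X) a.e.
    (hμcond : μ[Y | MeasurableSpace.comap (fun ω => (X ω, A ω)) inferInstance]
        =ᵐ[μ] fun ω => A ω * μ1 (X ω) + (1 - A ω) * μ0 (X ω))
    (δ : ℝ) (hδ : 0 < δ) :
    -- E[φ_Q(Z; η, δ)] = E[(δπ₁μ₁ + π₀μ₀)/(δπ₁ + π₀)]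
    ∫ ω,
        ((δ * π1 (X ω) *
            ((if A ω = 1 then (1:ℝ) else 0) / π1 (X ω) * (Y ω - μ1 (X ω)) + μ1 (X ω))
          + (1 - π1 (X ω)) *
            ((if A ω = 0 then (1:ℝ) else 0) / (1 - π1 (X ω)) * (Y ω - μ0 (X ω)) + μ0 (X ω)))
          / (δ * π1 (X ω) + (1 - π1 (X ω)))
        + δ * (μ1 (X ω) - μ0 (X ω)) * (A ω - π1 (X ω))
          / (δ * π1 (X ω) + (1 - π1 (X ω))) ^ 2) ∂μ
      = ∫ ω, (δ * π1 (X ω) * μ1 (X ω) + (1 - π1 (X ω)) * μ0 (X ω))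
            / (δ * π1 (X ω) + (1 - π1 (X ω))) ∂μ :=
  stmt11_general μ X hX A Y hA hY hAbin π1 μ0 μ1 hπm hμ0m hμ1m ε hε0 hπbound hπ hμcond δ hδ
end
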